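/- In the two-dimensional case, the map s_{(a,z)}(a',z') = (2a−a', 2cosh(2(a−a'))z − z') is, for each fixed (a,z), an involution of ℝ², and satisfies s_p ∘ s_q ∘ s_p = s_{s_p(q)} for all p,q ∈ ℝ². -/

import Mathlib

/-!
Replace `t ↦ 2 cosh (2t)` by any coefficient function `f`. Then `s_p` is an involution as soon as
`f` is even, and for `p = (a,z)`, `q = (b,w)`, `r = (c,v)` the second coordinates of
`s_p (s_q (s_p r))` and `s_{s_p(q)} r` agree by d'Alembert's cosine functional equation
`f (x + y) + f (x - y) = f x * f y` at `x = 2a - b - c`, `y = a - b`; `2 cosh (2t)` satisfies it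
by the addition formulas.
-/

noncomputable section

/-- The `ax+b`-type group law on `ℝ²`: `(a,z)·(a',z') = (a+a', e^{−2a'}z + z')`. -/
def mul2 (p q : ℝ × ℝ) : ℝ × ℝ := (p.1 + q.1, Real.exp (-2 * q.1) * p.2 + q.2)

/-- The inverse for `mul2`. -/
def inv2 (p : ℝ × ℝ) : ℝ × ℝ := (-p.1, -(Real.exp (2 * p.1) * p.2))

/-- The two-dimensional geodesic symmetry `s_{(a,z)}(a',z') = (2a−a', 2cosh(2(a−a'))z − z')`. -/
def sym2 (p q : ℝ × ℝ) : ℝ × ℝ :=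
  (2 * p.1 - q.1, 2 * Real.cosh (2 * (p.1 - q.1)) * p.2 - q.2)

section CosineSymmetry

variable {R : Type*} [CommRing R] {f : R → R}

def cosineSymmetry (f : R → R) (p q : R × R) : R × R :=
  (2 * p.1 - q.1, f (p.1 - q.1) * p.2 - q.2)

theorem cosineSymmetry_involutive (hf : Function.Even f) (p : R × R) :
    Function.Involutive (cosineSymmetry f p) := by
  rintro ⟨b, w⟩
  obtain ⟨a, z⟩ := p
  refine Prod.ext (by simp only [cosineSymmetry]; ring) ?_
  show f (a - (2 * a - b)) * z - (f (a - b) * z - w) = w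
  rw [show a - (2 * a - b) = -(a - b) by ring, hf]
  ring

theorem cosineSymmetry_conj (hf : Function.Even f)
    (hcos : ∀ x y, f (x + y) + f (x - y) = f x * f y) (p q r : R × R) :
    cosineSymmetry f p (cosineSymmetry f q (cosineSymmetry f p r)) =
      cosineSymmetry f (cosineSymmetry f p q) r := by
  obtain ⟨a, z⟩ := p
  obtain ⟨b, w⟩ := q
  obtain ⟨c, v⟩ := r
  refine Prod.ext (by simp only [cosineSymmetry]; ring) ?_
  show f (a - (2 * b - (2 * a - c))) * z - (f (b - (2 * a - c)) * w - (f (a - c) * z - v)) =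
    f (2 * a - b - c) * (f (a - b) * z - w) - v
  have hsum := hcos (2 * a - b - c) (a - b)
  rw [show 2 * a - b - c - (a - b) = a - c by ring] at hsum
  rw [show a - (2 * b - (2 * a - c)) = 2 * a - b - c + (a - b) by ring,
    show b - (2 * a - c) = -(2 * a - b - c) by ring, hf]
  linear_combination z * hsum

end CosineSymmetry

theorem even_two_mul_cosh_two_mul : Function.Even fun t => 2 * Real.cosh (2 * t) := by
  intro t
  simp only [mul_neg, Real.cosh_neg]

theorem two_mul_cosh_two_mul_add_add_sub (x y : ℝ) :
    2 * Real.cosh (2 * (x + y)) + 2 * Real.cosh (2 * (x - y)) =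
      2 * Real.cosh (2 * x) * (2 * Real.cosh (2 * y)) := by
  rw [mul_add, mul_sub, Real.cosh_add, Real.cosh_sub]
  ring

/-- each `sym2 p` is an involution of `ℝ²`, and the symmetric-space
identity `s_p ∘ s_q ∘ s_p = s_{s_p(q)}` holds. -/
theorem sym2_involutive_and_identity :
    (∀ p q : ℝ × ℝ, sym2 p (sym2 p q) = q) ∧
    (∀ p q r : ℝ × ℝ, sym2 p (sym2 q (sym2 p r)) = sym2 (sym2 p q) r) :=
  ⟨cosineSymmetry_involutive even_two_mul_cosh_two_mul,
    cosineSymmetry_conj even_two_mul_cosh_two_mul two_mul_cosh_two_mul_add_add_sub⟩
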